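/- Main inductive proposition (Harvey–Vondrák/Fernández–Procacci): let μ, p : P → ℝ≥0 satisfy p_x · Z_{Γ*(x)}(μ) ≤ μ_x for all x ∈ P. Define Q_S(p) = Z_S(−p). Then for any finite Λ ⊆ P, any S ⊆ Λ and any x ∈ S (writing S^c = Λ\S), one has Q_S(p) · Z_{(S\{x})^c}(μ) ≥ Q_{S\{x}}(p) · Z_{S^c}(μ). In particular Q_S(p) > 0. -/

import Mathlib

open Finset

def indepSet {P : Type*} [DecidableEq P] (W : P → P → ℕ) (S : Finset P) : Prop :=
  ∀ x ∈ S, ∀ y ∈ S, x ≠ y → W x y = 1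

instance {P : Type*} [DecidableEq P] (W : P → P → ℕ) : DecidablePred (indepSet W) :=
  fun _ => by unfold indepSet; infer_instance

/-- Polymer partition function `Z_Λ(a) = Σ_{S ⊆ Λ independent} Π_{y ∈ S} a y`. -/
def Zpart {P : Type*} [DecidableEq P] {R : Type*} [CommRing R] (W : P → P → ℕ)
    (Λ : Finset P) (a : P → R) : R :=
  ∑ S ∈ Λ.powerset.filter (indepSet W), ∏ y ∈ S, a y

/-- `Γ*(x)`: the set of polymers incompatible with `x`. -/
def Γstar {P : Type*} [Fintype P] [DecidableEq P] (W : P → P → ℕ) (x : P) : Finset P :=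
  Finset.univ.filter fun y => W x y = 0


/-!
Write `Q_T = Z_T(-p)` and `Z_A = Z_A(μ)`. The inequality says that the ratio `Q_T / Z_{Λ \ T}`
does not decrease when `x` is added to `T`; we prove that this ratio is monotone on subsets
of `Λ`, by strong induction on `T`. Deleting `x` gives `Q_S = Q_{S-x} - p_x Q_{S \ Γ*(x)}` and
`Z_{Λ \ (S-x)} = Z_{Λ \ S} + μ_x Z_{(Λ \ S) \ Γ*(x)}`, so the step reduces to
`p_x Q_{S \ Γ*(x)} Z_{Λ \ (S-x)} ≤ μ_x Q_{S-x} Z_{(Λ \ S) \ Γ*(x)}`. Monotonicity below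
`S - x` (the induction hypothesis) bounds the left side by `p_x Q_{S-x} Z_{Λ \ (S \ Γ*(x))}`,
the submultiplicativity `Z_{A ∪ B} ≤ Z_A Z_B` splits the last factor as
`Z_{Γ*(x)} Z_{(Λ \ S) \ Γ*(x)}`, and `p_x Z_{Γ*(x)} ≤ μ_x` concludes. Comparing with `T = ∅`
gives `Q_S ≥ Z_{Λ \ S} / Z_Λ > 0`.
-/

section Zpart

variable {P : Type*} [DecidableEq P] (W : P → P → ℕ)

lemma indepSet_mono {S T : Finset P} (h : S ⊆ T) (hT : indepSet W T) : indepSet W S :=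
  fun a ha b hb hab => hT a (h ha) b (h hb) hab

lemma Zpart_empty {R : Type*} [CommRing R] (a : P → R) : Zpart W ∅ a = 1 := by
  simp [Zpart, filter_singleton, indepSet]

variable {R : Type*} [CommRing R] [PartialOrder R] [IsOrderedRing R] {a : P → R}

lemma one_le_Zpart (Λ : Finset P) (ha : ∀ y, 0 ≤ a y) : 1 ≤ Zpart W Λ a := by
  have hempty : ∅ ∈ Λ.powerset.filter (indepSet W) := by simp [indepSet]
  simpa [Zpart] using single_le_sum (f := fun S => ∏ y ∈ S, a y)
    (fun S _ => prod_nonneg fun y _ => ha y) hempty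

lemma Zpart_pos [Nontrivial R] (Λ : Finset P) (ha : ∀ y, 0 ≤ a y) : 0 < Zpart W Λ a :=
  zero_lt_one.trans_le (one_le_Zpart W Λ ha)

lemma Zpart_mono {Λ Λ' : Finset P} (h : Λ ⊆ Λ') (ha : ∀ y, 0 ≤ a y) :
    Zpart W Λ a ≤ Zpart W Λ' a :=
  sum_le_sum_of_subset_of_nonneg (filter_subset_filter _ (powerset_mono.2 h))
    fun _ _ _ => prod_nonneg fun y _ => ha y

lemma Zpart_union_le_mul (A B : Finset P) (ha : ∀ y, 0 ≤ a y) :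
    Zpart W (A ∪ B) a ≤ Zpart W A a * Zpart W B a := by
  let split : Finset P → Finset P × Finset P :=
    fun T => (T.filter (· ∈ A), T.filter (· ∉ A))
  have split_inj : split.Injective := fun T T' h => by
    rw [← filter_union_filter_not_eq (· ∈ A) T, ← filter_union_filter_not_eq (· ∈ A) T']
    simp only [split, Prod.ext_iff] at h
    rw [h.1, h.2]
  have split_mem : ∀ T ∈ (A ∪ B).powerset.filter (indepSet W),
      split T ∈ A.powerset.filter (indepSet W) ×ˢ B.powerset.filter (indepSet W) := by
    intro T hT
    simp only [mem_filter, mem_powerset] at hT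
    simp only [split, mem_product, mem_filter, mem_powerset]
    refine ⟨⟨fun y hy => (mem_filter.1 hy).2, indepSet_mono W (filter_subset _ _) hT.2⟩,
      fun y hy => ?_, indepSet_mono W (filter_subset _ _) hT.2⟩
    obtain ⟨hyT, hyA⟩ := mem_filter.1 hy
    exact (mem_union.1 (hT.1 hyT)).resolve_left hyA
  calc Zpart W (A ∪ B) a
      = ∑ q ∈ ((A ∪ B).powerset.filter (indepSet W)).image split,
          (∏ y ∈ q.1, a y) * ∏ y ∈ q.2, a y := by
        rw [sum_image split_inj.injOn]
        exact sum_congr rfl fun T _ => (prod_filter_mul_prod_filter_not T (· ∈ A) a).symm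
    _ ≤ ∑ q ∈ A.powerset.filter (indepSet W) ×ˢ B.powerset.filter (indepSet W),
          (∏ y ∈ q.1, a y) * ∏ y ∈ q.2, a y :=
        sum_le_sum_of_subset_of_nonneg (image_subset_iff.2 split_mem) fun q _ _ =>
          mul_nonneg (prod_nonneg fun y _ => ha y) (prod_nonneg fun y _ => ha y)
    _ = Zpart W A a * Zpart W B a := by rw [sum_product, Zpart, Zpart, sum_mul_sum]

lemma Zpart_le_mul_of_subset_union {A B C : Finset P} (h : A ⊆ B ∪ C) (ha : ∀ y, 0 ≤ a y) :
    Zpart W A a ≤ Zpart W B a * Zpart W C a :=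
  (Zpart_mono W h ha).trans (Zpart_union_le_mul W B C ha)

end Zpart

section Deletion

variable {P : Type*} [Fintype P] [DecidableEq P] {W : P → P → ℕ}

lemma mem_Γstar_self (hdiag : ∀ x, W x x = 0) (x : P) : x ∈ Γstar W x := by
  simp [Γstar, hdiag]

lemma indepSet_insert_iff (hsym : ∀ x y, W x y = W y x) (h01 : ∀ x y, W x y = 0 ∨ W x y = 1)
    {x : P} {T : Finset P} (hx : x ∉ T) :
    indepSet W (insert x T) ↔ indepSet W T ∧ Disjoint T (Γstar W x) := by
  simp only [disjoint_left, Γstar, mem_filter, mem_univ, true_and]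
  constructor
  · intro h
    refine ⟨indepSet_mono W (subset_insert x T) h, fun y hy hxy => ?_⟩
    have := h x (mem_insert_self x T) y (mem_insert_of_mem hy) (ne_of_mem_of_not_mem hy hx).symm
    omega
  · rintro ⟨hT, hdisj⟩ u hu v hv huv
    have hxW : ∀ y ∈ T, W x y = 1 := fun y hy => (h01 x y).resolve_left (hdisj hy)
    rcases mem_insert.1 hu with rfl | huT <;> rcases mem_insert.1 hv with rfl | hvT
    · exact absurd rfl huv
    · exact hxW v hvT
    · rw [hsym]; exact hxW u huT
    · exact hT u huT v hvT huv

lemma Zpart_eq_erase_add (hsym : ∀ x y, W x y = W y x) (hdiag : ∀ x, W x x = 0)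
    (h01 : ∀ x y, W x y = 0 ∨ W x y = 1) {R : Type*} [CommRing R] (Λ : Finset P) (a : P → R)
    {x : P} (hx : x ∈ Λ) :
    Zpart W Λ a = Zpart W (Λ.erase x) a + a x * Zpart W (Λ \ Γstar W x) a := by
  have hindep : (Λ.erase x).powerset.filter (fun T => indepSet W (insert x T)) =
      (Λ \ Γstar W x).powerset.filter (indepSet W) := by
    ext T
    simp only [mem_filter, mem_powerset, subset_sdiff, subset_erase]
    constructor
    · rintro ⟨⟨hTΛ, hxT⟩, hT⟩
      obtain ⟨hT, hdisj⟩ := (indepSet_insert_iff hsym h01 hxT).1 hT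
      exact ⟨⟨hTΛ, hdisj⟩, hT⟩
    · rintro ⟨⟨hTΛ, hdisj⟩, hT⟩
      have hxT : x ∉ T := fun h => disjoint_left.1 hdisj h (mem_Γstar_self hdiag x)
      exact ⟨⟨hTΛ, hxT⟩, (indepSet_insert_iff hsym h01 hxT).2 ⟨hT, hdisj⟩⟩
  conv_lhs => rw [Zpart, ← insert_erase hx, sum_filter, sum_powerset_insert (notMem_erase x Λ)]
  rw [Zpart, Zpart, sum_filter, ← hindep, sum_filter, mul_sum]
  congr 1
  refine sum_congr rfl fun T hT => ?_
  rw [prod_insert fun h => (subset_erase.1 (mem_powerset.1 hT)).2 h, mul_ite, mul_zero]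

end Deletion

lemma le_of_subset_of_forall_erase_le {α β : Type*} [DecidableEq α] [Preorder β]
    {F : Finset α → β} {S : Finset α} (hF : ∀ T ⊆ S, ∀ x ∈ T, F (T.erase x) ≤ F T)
    {U T : Finset α} (hUT : U ⊆ T) (hTS : T ⊆ S) : F U ≤ F T := by
  induction T using Finset.strongInduction with
  | H T ih =>
    by_cases hTU : T ⊆ U
    · rw [hUT.antisymm hTU]
    · obtain ⟨x, hxT, hxU⟩ := not_subset.1 hTU
      exact (ih _ (erase_ssubset hxT) (subset_erase.2 ⟨hUT, hxU⟩)
        ((erase_subset x T).trans hTS)).trans (hF T hTS x hxT)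

section FernandezProcacci

variable {P : Type*} [DecidableEq P] {W : P → P → ℕ} {μ p : P → ℝ}

variable (W μ p) in
noncomputable def fpRatio (Λ T : Finset P) : ℝ :=
  Zpart W T (fun y => -p y) / Zpart W (Λ \ T) μ

lemma fpRatio_le_fpRatio_iff (hμ : ∀ x, 0 ≤ μ x) {Λ U T : Finset P} :
    fpRatio W μ p Λ U ≤ fpRatio W μ p Λ T ↔
      Zpart W U (fun y => -p y) * Zpart W (Λ \ T) μ ≤
        Zpart W T (fun y => -p y) * Zpart W (Λ \ U) μ :=
  div_le_div_iff₀ (Zpart_pos W _ hμ) (Zpart_pos W _ hμ)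

lemma fpRatio_empty_pos (hμ : ∀ x, 0 ≤ μ x) (Λ : Finset P) : 0 < fpRatio W μ p Λ ∅ := by
  rw [fpRatio, Zpart_empty]
  exact div_pos one_pos (Zpart_pos W _ hμ)

lemma Zpart_neg_pos_of_fpRatio_pos (hμ : ∀ x, 0 ≤ μ x) {Λ T : Finset P}
    (h : 0 < fpRatio W μ p Λ T) : 0 < Zpart W T (fun y => -p y) :=
  (div_pos_iff_of_pos_right (Zpart_pos W _ hμ)).1 h

variable [Fintype P]

lemma fpRatio_erase_le (hsym : ∀ x y, W x y = W y x) (hdiag : ∀ x, W x x = 0)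
    (h01 : ∀ x y, W x y = 0 ∨ W x y = 1) (hμ : ∀ x, 0 ≤ μ x) (hp : ∀ x, 0 ≤ p x)
    (hFP : ∀ x, p x * Zpart W (Γstar W x) μ ≤ μ x) {Λ S : Finset P} (hS : S ⊆ Λ) {x : P}
    (hx : x ∈ S)
    (hmono : ∀ U T, U ⊆ T → T ⊆ S.erase x → fpRatio W μ p Λ U ≤ fpRatio W μ p Λ T) :
    fpRatio W μ p Λ (S.erase x) ≤ fpRatio W μ p Λ S := by
  set G := Γstar W x
  set Q : Finset P → ℝ := fun T => Zpart W T (fun y => -p y)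
  set Z : Finset P → ℝ := fun T => Zpart W T μ
  have hxG : x ∈ G := mem_Γstar_self hdiag x
  have hQ : Q S = Q (S.erase x) - p x * Q (S \ G) := by
    simp only [Q, Zpart_eq_erase_add hsym hdiag h01 S _ hx]
    ring
  have hZ : Z (Λ \ S.erase x) = Z (Λ \ S) + μ x * Z ((Λ \ S) \ G) := by
    have hxΛ : x ∈ Λ \ S.erase x := by simp [hS hx]
    have herase : (Λ \ S.erase x).erase x = Λ \ S := by
      ext z; by_cases hzx : z = x <;> simp_all
    have hsdiff : (Λ \ S.erase x) \ G = (Λ \ S) \ G := by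
      ext z; by_cases hzx : z = x <;> simp_all
    simp only [Z]
    rw [Zpart_eq_erase_add hsym hdiag h01 _ μ hxΛ, herase, hsdiff]
  have hQpos : 0 < Q (S.erase x) := Zpart_neg_pos_of_fpRatio_pos hμ
    ((fpRatio_empty_pos hμ Λ).trans_le (hmono _ _ (empty_subset _) subset_rfl))
  have htele : Q (S \ G) * Z (Λ \ S.erase x) ≤ Q (S.erase x) * Z (Λ \ (S \ G)) :=
    (fpRatio_le_fpRatio_iff hμ).1 (hmono _ _ (fun z hz => mem_erase.2
      ⟨fun h => (mem_sdiff.1 hz).2 (h ▸ hxG), (mem_sdiff.1 hz).1⟩) subset_rfl)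
  have hsplit : Z (Λ \ (S \ G)) ≤ Z G * Z ((Λ \ S) \ G) :=
    Zpart_le_mul_of_subset_union W (fun z hz => by
      simp only [mem_union, mem_sdiff] at hz ⊢; tauto) hμ
  have key : p x * (Q (S \ G) * Z (Λ \ S.erase x)) ≤ μ x * (Q (S.erase x) * Z ((Λ \ S) \ G)) :=
    calc p x * (Q (S \ G) * Z (Λ \ S.erase x))
        ≤ p x * (Q (S.erase x) * (Z G * Z ((Λ \ S) \ G))) :=
          mul_le_mul_of_nonneg_left
            (htele.trans (mul_le_mul_of_nonneg_left hsplit hQpos.le)) (hp x)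
      _ = p x * Z G * (Q (S.erase x) * Z ((Λ \ S) \ G)) := by ring
      _ ≤ μ x * (Q (S.erase x) * Z ((Λ \ S) \ G)) :=
          mul_le_mul_of_nonneg_right (hFP x) (mul_nonneg hQpos.le (Zpart_pos W _ hμ).le)
  rw [fpRatio_le_fpRatio_iff hμ]
  change Q (S.erase x) * Z (Λ \ S) ≤ Q S * Z (Λ \ S.erase x)
  rw [hQ]
  nlinarith [key, hZ]

lemma fpRatio_mono (hsym : ∀ x y, W x y = W y x) (hdiag : ∀ x, W x x = 0)
    (h01 : ∀ x y, W x y = 0 ∨ W x y = 1) (hμ : ∀ x, 0 ≤ μ x) (hp : ∀ x, 0 ≤ p x)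
    (hFP : ∀ x, p x * Zpart W (Γstar W x) μ ≤ μ x) {Λ U T : Finset P} (hUT : U ⊆ T)
    (hTΛ : T ⊆ Λ) : fpRatio W μ p Λ U ≤ fpRatio W μ p Λ T := by
  have step : ∀ S Λ, S ⊆ Λ → ∀ x ∈ S, fpRatio W μ p Λ (S.erase x) ≤ fpRatio W μ p Λ S := by
    intro S
    induction S using Finset.strongInduction with
    | H S ih =>
      intro Λ hS x hx
      refine fpRatio_erase_le hsym hdiag h01 hμ hp hFP hS hx fun U T hUT hT => ?_
      refine le_of_subset_of_forall_erase_le (fun T' hT' y hy => ?_) hUT hT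
      exact ih T' (hT'.trans_ssubset (erase_ssubset hx)) Λ
        (hT'.trans ((erase_subset x S).trans hS)) y hy
  exact le_of_subset_of_forall_erase_le (fun S hS x hx => step S Λ (hS.trans hTΛ) x hx) hUT
    subset_rfl

end FernandezProcacci

theorem fp_main_inductive_prop_general {P : Type*} [Fintype P] [DecidableEq P] (W : P → P → ℕ)
    (hsym : ∀ x y, W x y = W y x) (hdiag : ∀ x, W x x = 0)
    (h01 : ∀ x y, W x y = 0 ∨ W x y = 1)
    (μ p : P → ℝ) (hμ : ∀ x, 0 ≤ μ x) (hp : ∀ x, 0 ≤ p x)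
    (hFP : ∀ x, p x * Zpart W (Γstar W x) μ ≤ μ x)
    (Λ S : Finset P) (hS : S ⊆ Λ) (x : P) :
    0 < Zpart W S (fun y => -p y) ∧
      Zpart W (S.erase x) (fun y => -p y) * Zpart W (Λ \ S) μ ≤
        Zpart W S (fun y => -p y) * Zpart W (Λ \ S.erase x) μ := by
  have hmono {U : Finset P} (hU : U ⊆ S) : fpRatio W μ p Λ U ≤ fpRatio W μ p Λ S :=
    fpRatio_mono hsym hdiag h01 hμ hp hFP hU hS
  exact ⟨Zpart_neg_pos_of_fpRatio_pos hμ
      ((fpRatio_empty_pos hμ Λ).trans_le (hmono (empty_subset S))),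
    (fpRatio_le_fpRatio_iff hμ).1 (hmono (erase_subset x S))⟩

theorem fp_main_inductive_prop {P : Type*} [Fintype P] [DecidableEq P] (W : P → P → ℕ)
    (hsym : ∀ x y, W x y = W y x) (hdiag : ∀ x, W x x = 0)
    (h01 : ∀ x y, W x y = 0 ∨ W x y = 1)
    (μ p : P → ℝ) (hμ : ∀ x, 0 ≤ μ x) (hp : ∀ x, 0 ≤ p x)
    (hFP : ∀ x, p x * Zpart W (Γstar W x) μ ≤ μ x)
    (Λ S : Finset P) (hS : S ⊆ Λ) (x : P) (hx : x ∈ S) :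
    0 < Zpart W S (fun y => -p y) ∧
      Zpart W (S.erase x) (fun y => -p y) * Zpart W (Λ \ S) μ ≤
        Zpart W S (fun y => -p y) * Zpart W (Λ \ S.erase x) μ :=
  fp_main_inductive_prop_general W hsym hdiag h01 μ p hμ hp hFP Λ S hS x
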